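/- arXiv:2510.20311 — 2 statements merged into one kernel-verified Lean document; each statement's English description precedes it below -/
import Mathlib

section
/- For an ensemble E = {(η_i, ρ_i)}_{i=1}^n, the maximum success probability p_G(E) over all maximum-confidence measurements satisfies p_G(E) ≥ λ/n, where λ is the smallest nonzero eigenvalue of ρ₀ = Σ_i η_i ρ_i. -/
/-!
Pick `i₀` with `η i₀ ≥ 1 / n` and put `A = C ρ₀ - η ρ_{i₀} ⪰ 0`. Minimality of `C` says that
`ε ρ₀ ⪯ A` fails for every `ε > 0`; as `A` vanishes on `ker ρ₀`, this yields a unit vector `v` in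
the range of `ρ₀` with `A v = 0`. The measurement `M_{i₀} = v v*`, `M_? = 1 - v v*` then has
maximum confidence, and its success probability is
`η ⟨v, ρ_{i₀} v⟩ = C ⟨v, ρ₀ v⟩ ≥ C λ ≥ η λ ≥ λ / n`, where `C ≥ η` comes from `tr A ≥ 0`.
-/

open Matrix
open scoped ComplexOrder MatrixOrder

namespace Matrix

variable {n 𝕜 : Type*} [Fintype n] [RCLike 𝕜]

lemma mulVec_eq_zero_of_le {A P : Matrix n n 𝕜} (hA : 0 ≤ A) (hAP : A ≤ P) {v : n → 𝕜}
    (hv : P *ᵥ v = 0) : A *ᵥ v = 0 := by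
  have hle : 0 ≤ -(star v ⬝ᵥ A *ᵥ v) := by
    simpa [sub_mulVec, hv] using (le_iff.1 hAP).dotProduct_mulVec_nonneg v
  exact (hA.posSemidef.dotProduct_mulVec_zero_iff v).1 <|
    le_antisymm (neg_nonneg.1 hle) (hA.posSemidef.dotProduct_mulVec_nonneg v)

lemma dotProduct_mulVec_mono {A B : Matrix n n 𝕜} (h : A ≤ B) (v : n → 𝕜) :
    star v ⬝ᵥ A *ᵥ v ≤ star v ⬝ᵥ B *ᵥ v := by
  simpa [sub_mulVec] using (le_iff.1 h).dotProduct_mulVec_nonneg v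

lemma le_of_posSemidef_smul_sub_smul {P Q : Matrix n n 𝕜} {a c : ℝ}
    (h : ((c : 𝕜) • P - (a : 𝕜) • Q).PosSemidef) (hP : P.trace = 1) (hQ : Q.trace = 1) :
    a ≤ c := by
  have := h.trace_nonneg
  rwa [trace_sub, trace_smul, trace_smul, hP, hQ, smul_eq_mul, smul_eq_mul, mul_one, mul_one,
    ← RCLike.ofReal_sub, RCLike.ofReal_nonneg, sub_nonneg] at this

lemma exists_smul_star_dotProduct_self_eq_one {v : n → 𝕜} (hv : v ≠ 0) :
    ∃ c : 𝕜, star (c • v) ⬝ᵥ (c • v) = 1 := by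
  obtain ⟨r, hr, hrv⟩ := RCLike.pos_iff_exists_ofReal.1 (dotProduct_star_self_pos_iff.2 hv)
  refine ⟨((√r)⁻¹ : ℝ), ?_⟩
  rw [star_smul, smul_dotProduct, dotProduct_smul, ← hrv, RCLike.star_def, RCLike.conj_ofReal,
    smul_eq_mul, smul_eq_mul, ← RCLike.ofReal_mul, ← RCLike.ofReal_mul, ← mul_assoc,
    ← mul_inv, Real.mul_self_sqrt hr.le, inv_mul_cancel₀ hr.ne', RCLike.ofReal_one]

lemma mul_re_dotProduct_mulVec_eq_of_mulVec_eq_zero {A Q : Matrix n n 𝕜} {a c : ℝ}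
    {v : n → 𝕜} (h : ((c : 𝕜) • A - (a : 𝕜) • Q) *ᵥ v = 0) :
    a * RCLike.re (star v ⬝ᵥ Q *ᵥ v) = c * RCLike.re (star v ⬝ᵥ A *ᵥ v) := by
  have := congr(RCLike.re (star v ⬝ᵥ $h))
  simp only [sub_mulVec, smul_mulVec, dotProduct_sub, dotProduct_smul, dotProduct_zero,
    smul_eq_mul, map_sub, RCLike.re_ofReal_mul, map_zero] at this
  linarith

lemma isStarProjection_vecMulVec {v : n → 𝕜} (hv : star v ⬝ᵥ v = 1) :
    IsStarProjection (vecMulVec v (star v)) :=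
  ⟨by rw [IsIdempotentElem, vecMulVec_mul_vecMulVec, hv, one_smul],
    (posSemidef_vecMulVec_self_star v).isHermitian⟩

lemma trace_mul_vecMulVec_star (A : Matrix n n 𝕜) (v : n → 𝕜) :
    (A * vecMulVec v (star v)).trace = star v ⬝ᵥ A *ᵥ v := by
  rw [mul_vecMulVec, trace_vecMulVec, dotProduct_comm]

variable [DecidableEq n]

lemma PosDef.exists_smul_one_le {A : Matrix n n 𝕜} (hA : A.PosDef) :
    ∃ δ : ℝ, 0 < δ ∧ δ • (1 : Matrix n n 𝕜) ≤ A := by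
  obtain ⟨δ, hδ, hδA⟩ : ∃ δ : ℝ, 0 < δ ∧ ∀ x ∈ spectrum ℝ A, δ ≤ x := by
    simp_rw [hA.isHermitian.spectrum_real_eq_range_eigenvalues, Set.forall_mem_range]
    rcases isEmpty_or_nonempty n with hn | hn
    · exact ⟨1, one_pos, isEmptyElim⟩
    · obtain ⟨i, hi⟩ := Finite.exists_min hA.isHermitian.eigenvalues
      exact ⟨_, hA.eigenvalues_pos i, hi⟩
  refine ⟨δ, hδ, ?_⟩
  rw [← Algebra.algebraMap_eq_smul_one]
  exact algebraMap_le_of_le_spectrum hδA hA.isHermitian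

/-- If `δ • P ≤ A` fails for every `δ > 0`, then `A + (1 - P)` cannot be positive definite
(compress `δ • 1 ≤ A + (1 - P)` by `P`), and a vector in its kernel lies in `ker A ∩ range P`. -/
lemma IsStarProjection.exists_mulVec_eq_zero_of_forall_not_smul_le {A P : Matrix n n 𝕜}
    (hP : IsStarProjection P) (hA : 0 ≤ A) (hAP : A * P = A)
    (h : ∀ ε : ℝ, 0 < ε → ¬ ε • P ≤ A) : ∃ v ≠ 0, A *ᵥ v = 0 ∧ P *ᵥ v = v := by
  have hPA : P * A = A := by
    simpa [hP.isSelfAdjoint.star_eq, (IsSelfAdjoint.of_nonneg hA).star_eq] using congr(star $hAP)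
  by_cases hpos : (A + (1 - P)).PosDef
  · obtain ⟨δ, hδ, hle⟩ := hpos.exists_smul_one_le
    refine absurd ?_ (h δ hδ)
    have hconj := hP.isSelfAdjoint.conjugate_le_conjugate hle
    rwa [mul_smul_comm, mul_one, smul_mul_assoc, hP.isIdempotentElem.eq, mul_add, add_mul,
      hP.mul_one_sub_self, zero_mul, add_zero, hPA, hAP] at hconj
  have hA' : (A + (1 - P)).PosSemidef := (add_nonneg hA hP.one_sub_nonneg).posSemidef
  obtain ⟨v, hv0, hv⟩ := exists_mulVec_eq_zero_iff.2 <|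
    by_contra fun hdet => hpos (hA'.posDef_iff_det_ne_zero.2 hdet)
  have hsum : star v ⬝ᵥ A *ᵥ v + star v ⬝ᵥ (1 - P) *ᵥ v = 0 := by
    rw [← dotProduct_add, ← add_mulVec, hv, dotProduct_zero]
  have hP' := hP.one_sub_nonneg.posSemidef
  obtain ⟨hAv, hPv⟩ := (add_eq_zero_iff_of_nonneg (hA.posSemidef.dotProduct_mulVec_nonneg v)
    (hP'.dotProduct_mulVec_nonneg v)).1 hsum
  refine ⟨v, hv0, (hA.posSemidef.dotProduct_mulVec_zero_iff v).1 hAv, ?_⟩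
  have := (hP'.dotProduct_mulVec_zero_iff v).1 hPv
  rwa [sub_mulVec, one_mulVec, sub_eq_zero, eq_comm] at this

/-- The orthogonal projection onto the range of `A`; junk value `0` unless `A` is self-adjoint. -/
noncomputable def supportProj (A : Matrix n n 𝕜) : Matrix n n 𝕜 :=
  cfc (fun x : ℝ => if x = 0 then 0 else 1) A

lemma isStarProjection_supportProj (A : Matrix n n 𝕜) : IsStarProjection (supportProj A) := by
  refine ⟨?_, cfc_predicate _ _⟩
  by_cases hA : IsSelfAdjoint A
  · rw [IsIdempotentElem, supportProj, ← cfc_mul _ _ A (A.finite_real_spectrum.continuousOn _)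
      (A.finite_real_spectrum.continuousOn _)]
    congr 1
    ext x
    split_ifs <;> simp
  · simp [supportProj, cfc_apply_of_not_predicate _ hA, IsIdempotentElem]

section supportProj

variable {A : Matrix n n 𝕜} (hA : IsSelfAdjoint A)
include hA

lemma mul_one_sub_supportProj : A * (1 - supportProj A) = 0 := by
  have hf (f : ℝ → ℝ) : ContinuousOn f (spectrum ℝ A) := A.finite_real_spectrum.continuousOn f
  have h0 : (fun x : ℝ => x * (1 - if x = 0 then 0 else 1)) = 0 := by
    ext x; split_ifs with hx <;> simp [hx]
  calc A * (1 - supportProj A) = cfc (fun x : ℝ => x * (1 - if x = 0 then 0 else 1)) A := by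
        rw [cfc_mul _ _ A (hf _) (hf _), cfc_id' ℝ A, cfc_sub _ _ A (hf _) (hf _),
          cfc_const_one ℝ A, supportProj]
    _ = 0 := by rw [h0, cfc_zero]

lemma smul_supportProj_le {c : ℝ} (hc : ∀ x ∈ spectrum ℝ A, x ≠ 0 → c ≤ x) :
    c • supportProj A ≤ A := by
  have hf (f : ℝ → ℝ) : ContinuousOn f (spectrum ℝ A) := A.finite_real_spectrum.continuousOn f
  rw [supportProj, ← cfc_smul _ _ _ (hf _)]
  conv_rhs => rw [← cfc_id' ℝ A]
  refine cfc_mono (hf := hf _) (hg := hf _) fun x hx => ?_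
  split_ifs with h0
  · simp [h0]
  · simpa using hc x hx h0

lemma exists_le_smul_supportProj : ∃ M : ℝ, 0 < M ∧ A ≤ M • supportProj A := by
  have hf (f : ℝ → ℝ) : ContinuousOn f (spectrum ℝ A) := A.finite_real_spectrum.continuousOn f
  obtain ⟨M, hM⟩ := A.finite_real_spectrum.bddAbove
  refine ⟨max M 1, by positivity, ?_⟩
  rw [supportProj, ← cfc_smul _ _ _ (hf _)]
  conv_lhs => rw [← cfc_id' ℝ A]
  refine cfc_mono (hf := hf _) (hg := hf _) fun x hx => ?_
  split_ifs with h0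
  · simp [h0]
  · simpa using le_max_of_le_left (hM hx)

/-- Since `A ≤ M • supportProj A`, the hypothesis on `A` transfers to `supportProj A`, while
`B ≤ c • A` forces `B` to vanish on `ker A`, so that `B * supportProj A = B`. -/
lemma exists_unit_mulVec_eq_zero_of_forall_not_smul_le {B : Matrix n n 𝕜} (hB : 0 ≤ B) {c : ℝ}
    (hBA : B ≤ c • A) (h : ∀ ε : ℝ, 0 < ε → ¬ ε • A ≤ B) :
    ∃ v, star v ⬝ᵥ v = 1 ∧ B *ᵥ v = 0 ∧ supportProj A *ᵥ v = v := by
  have hBS : B * supportProj A = B := by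
    have : B * (1 - supportProj A) = 0 := ext_iff_mulVec.2 fun w => by
      rw [← mulVec_mulVec, zero_mulVec]
      refine mulVec_eq_zero_of_le hB hBA ?_
      rw [smul_mulVec, mulVec_mulVec, mul_one_sub_supportProj hA, zero_mulVec, smul_zero]
    rwa [mul_sub, mul_one, sub_eq_zero, eq_comm] at this
  obtain ⟨M, hM, hAM⟩ := exists_le_smul_supportProj hA
  have hS : ∀ ε : ℝ, 0 < ε → ¬ ε • supportProj A ≤ B := fun ε hε hle =>
    h (ε / M) (div_pos hε hM) <| le_trans (by
      simpa [smul_smul, div_mul_cancel₀ _ hM.ne'] using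
        smul_le_smul_of_nonneg_left hAM (div_pos hε hM).le) hle
  obtain ⟨v, hv0, hBv, hSv⟩ :=
    (isStarProjection_supportProj A).exists_mulVec_eq_zero_of_forall_not_smul_le hB hBS hS
  obtain ⟨a, ha⟩ := exists_smul_star_dotProduct_self_eq_one hv0
  exact ⟨a • v, ha, by rw [mulVec_smul, hBv, smul_zero], by rw [mulVec_smul, hSv]⟩

lemma exists_unit_mulVec_eq_zero_of_isLeast {Q : Matrix n n 𝕜} (hQ : Q.PosSemidef) {c : ℝ}
    (hc : IsLeast {q : ℝ | ((q : 𝕜) • A - Q).PosSemidef} c) :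
    ∃ v, star v ⬝ᵥ v = 1 ∧ ((c : 𝕜) • A - Q) *ᵥ v = 0 ∧ supportProj A *ᵥ v = v := by
  refine exists_unit_mulVec_eq_zero_of_forall_not_smul_le hA hc.1.nonneg (c := c) ?_
    fun ε hε hle => ?_
  · rw [le_iff, ← RCLike.real_smul_eq_coe_smul, sub_sub_cancel]
    exact hQ
  · have hsub : ((c - ε : ℝ) : 𝕜) • A - Q = (c : 𝕜) • A - Q - ε • A := by
      rw [RCLike.ofReal_sub, sub_smul, RCLike.real_smul_eq_coe_smul (K := 𝕜)]
      abel
    have := hc.2 (show (((c - ε : ℝ) : 𝕜) • A - Q).PosSemidef from hsub ▸ le_iff.1 hle)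
    linarith

end supportProj

lemma le_re_dotProduct_mulVec_of_supportProj {A : Matrix n n 𝕜} (hA : A.IsHermitian) {c : ℝ}
    (hc : ∀ j, hA.eigenvalues j ≠ 0 → c ≤ hA.eigenvalues j) {v : n → 𝕜}
    (hv : star v ⬝ᵥ v = 1) (hAv : supportProj A *ᵥ v = v) :
    c ≤ RCLike.re (star v ⬝ᵥ A *ᵥ v) := by
  have hle : c • supportProj A ≤ A := smul_supportProj_le hA <| by
    rw [hA.spectrum_real_eq_range_eigenvalues]
    rintro _ ⟨j, rfl⟩ hj
    exact hc j hj
  have := dotProduct_mulVec_mono hle v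
  rw [smul_mulVec, hAv, dotProduct_smul, hv, RCLike.real_smul_eq_coe_smul (K := 𝕜), smul_eq_mul,
    mul_one] at this
  simpa using (RCLike.le_iff_re_im.1 this).1

lemma exists_measurement_single {ι : Type*} [Fintype ι] [DecidableEq ι] (i₀ : ι)
    {N : Matrix n n 𝕜} (hN : IsStarProjection N) :
    ∃ M : Option ι → Matrix n n 𝕜, (∀ j, (M j).PosSemidef) ∧ ∑ j, M j = 1 ∧
      ∀ i, M (some i) = (Pi.single i₀ N : ι → Matrix n n 𝕜) i := by
  refine ⟨fun o => o.elim (1 - N) (Pi.single i₀ N), ?_, ?_, fun _ => rfl⟩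
  · rintro (_ | i)
    · exact hN.one_sub_nonneg.posSemidef
    · rcases eq_or_ne i i₀ with rfl | hi
      · simpa using hN.nonneg.posSemidef
      · simpa [hi] using PosSemidef.zero
  · simp [Fintype.sum_option, Finset.sum_pi_single']

end Matrix

theorem stmt_5_general {d n : ℕ} (hn : 0 < n)
    (η : Fin n → ℝ) (ρ : Fin n → Matrix (Fin d) (Fin d) ℂ)
    (hη : ∀ i, 0 < η i) (hηsum : ∑ i, η i = 1)
    (hρ : ∀ i, (ρ i).PosSemidef) (hρtr : ∀ i, (ρ i).trace = 1)
    (ρ₀ : Matrix (Fin d) (Fin d) ℂ) (hρ₀ : ρ₀ = ∑ i, (η i : ℂ) • ρ i)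
    (C : Fin n → ℝ)
    (hC : ∀ i, IsLeast { q : ℝ | ((q : ℂ) • ρ₀ - (η i : ℂ) • ρ i).PosSemidef } (C i))
    (hρ₀herm : ρ₀.IsHermitian) (lam : ℝ)
    (hlam : IsLeast { μ : ℝ | μ ≠ 0 ∧ ∃ j, hρ₀herm.eigenvalues j = μ } lam) :
    ∃ M : Option (Fin n) → Matrix (Fin d) (Fin d) ℂ,
      (∀ j, (M j).PosSemidef) ∧ ∑ j, M j = 1 ∧
      (∀ i, (((C i : ℂ) • ρ₀ - (η i : ℂ) • ρ i) * M (some i)).trace = 0) ∧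
      lam / n ≤ ∑ i, η i * (ρ i * M (some i)).trace.re := by
  obtain ⟨i₀, -, hi₀⟩ : ∃ i₀ ∈ Finset.univ, 1 / (n : ℝ) ≤ η i₀ :=
    Finset.exists_le_of_sum_le ⟨⟨0, hn⟩, Finset.mem_univ _⟩ (by simp [hηsum, hn.ne'])
  have hρ₀psd : ρ₀.PosSemidef :=
    hρ₀ ▸ posSemidef_sum _ fun i _ => (hρ i).smul (Complex.zero_le_real.2 (hη i).le)
  have hlam0 : 0 ≤ lam := by
    obtain ⟨-, j, rfl⟩ := hlam.1
    exact hρ₀psd.eigenvalues_nonneg j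
  have hηC : η i₀ ≤ C i₀ := le_of_posSemidef_smul_sub_smul (hC i₀).1
    (by simp [hρ₀, trace_sum, hρtr, ← Complex.ofReal_sum, hηsum]) (hρtr i₀)
  obtain ⟨v, hv1, hAv, hSv⟩ := exists_unit_mulVec_eq_zero_of_isLeast hρ₀herm
    ((hρ i₀).smul (Complex.zero_le_real.2 (hη i₀).le)) (hC i₀)
  -- cast `C i₀` to `ℂ` by `Complex.ofReal` rather than `RCLike.ofReal`, as in the statement
  change ((C i₀ : ℂ) • ρ₀ - (η i₀ : ℂ) • ρ i₀) *ᵥ v = 0 at hAv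
  have hlamv := le_re_dotProduct_mulVec_of_supportProj hρ₀herm
    (fun j hj => hlam.2 ⟨hj, j, rfl⟩) hv1 hSv
  obtain ⟨M, hM, hMsum, hMi⟩ := exists_measurement_single i₀ (isStarProjection_vecMulVec hv1)
  refine ⟨M, hM, hMsum, fun i => ?_, ?_⟩
  · rcases eq_or_ne i i₀ with rfl | hi
    · rw [hMi, Pi.single_eq_same, trace_mul_vecMulVec_star, hAv, dotProduct_zero]
    · rw [hMi, Pi.single_eq_of_ne hi, mul_zero, trace_zero]
  rw [Finset.sum_eq_single i₀ (fun i _ hi => by simp [hMi, hi]) (by simp), hMi,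
    Pi.single_eq_same, trace_mul_vecMulVec_star]
  calc lam / n = lam * (1 / n) := by ring
    _ ≤ lam * η i₀ := mul_le_mul_of_nonneg_left hi₀ hlam0
    _ ≤ lam * C i₀ := mul_le_mul_of_nonneg_left hηC hlam0
    _ ≤ C i₀ * (star v ⬝ᵥ ρ₀ *ᵥ v).re := by
      rw [mul_comm]
      exact mul_le_mul_of_nonneg_left hlamv (by linarith [hη i₀])
    _ = _ := (mul_re_dotProduct_mulVec_eq_of_mulVec_eq_zero hAv).symm

/-- p_G(E) ≥ λ/n for λ the smallest nonzero eigenvalue of ρ₀;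
i.e., there is a maximum-confidence measurement whose success probability is at least λ/n. -/
theorem stmt_5 {d n : ℕ} (hd : 0 < d) (hn : 0 < n)
    (η : Fin n → ℝ) (ρ : Fin n → Matrix (Fin d) (Fin d) ℂ)
    (hη : ∀ i, 0 < η i) (hηsum : ∑ i, η i = 1)
    (hρ : ∀ i, (ρ i).PosSemidef) (hρtr : ∀ i, (ρ i).trace = 1)
    (ρ₀ : Matrix (Fin d) (Fin d) ℂ) (hρ₀ : ρ₀ = ∑ i, (η i : ℂ) • ρ i)
    (C : Fin n → ℝ)
    (hC : ∀ i, IsLeast { q : ℝ | ((q : ℂ) • ρ₀ - (η i : ℂ) • ρ i).PosSemidef } (C i))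
    (hρ₀herm : ρ₀.IsHermitian) (lam : ℝ)
    (hlam : IsLeast { μ : ℝ | μ ≠ 0 ∧ ∃ j, hρ₀herm.eigenvalues j = μ } lam) :
    ∃ M : Option (Fin n) → Matrix (Fin d) (Fin d) ℂ,
      (∀ j, (M j).PosSemidef) ∧ ∑ j, M j = 1 ∧
      (∀ i, (((C i : ℂ) • ρ₀ - (η i : ℂ) • ρ i) * M (some i)).trace = 0) ∧
      lam / n ≤ ∑ i, η i * (ρ i * M (some i)).trace.re :=
  stmt_5_general hn η ρ hη hηsum hρ hρtr ρ₀ hρ₀ C hC hρ₀herm lam hlam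
end

section
/- If for each l = 1,…,L the measurement {M_?^l} ∪ {M_i^l}_{i=1}^{n_l} is a maximum-confidence measurement of the ensemble E^l, then the product measurement with conclusive operators M_c⃗ = ⊗_{l=1}^L M_{c_l}^l (and M_? = 1 − Σ_c⃗ M_c⃗) is a maximum-confidence measurement of the product ensemble E = ⊗_l E^l. -/
open Matrix BigOperators
open scoped ComplexOrder

/-- L-fold tensor (Kronecker) product of square complex matrices, realized on the
index type ∀ l, Fin (d l). -/
def tens {L : ℕ} {d : Fin L → ℕ}
    (X : ∀ l, Matrix (Fin (d l)) (Fin (d l)) ℂ) :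
    Matrix (∀ l, Fin (d l)) (∀ l, Fin (d l)) ℂ :=
  Matrix.of fun a b => ∏ l, X l (a l) (b l)

/-!
Tensor products are multiplicative and the trace is multiplicative on them, so the
maximum-confidence condition `C tr(ρ₀ M) = η tr(ρ M)` of each factor multiplies out to the
same condition for the product. The product operators are positive because `⊗ (Bᴴ B) =
(⊗ B)ᴴ (⊗ B)`, and they do not exceed `1`: expanding `1 = ⊗_l ∑_j M_j^l` distributes it into
the sum of all product operators, including those with some inconclusive factor `M_?^l`,
all of which are positive.
-/

lemma trace_smul_sub_smul_mul {R m : Type*} [CommRing R] [Fintype m] (a b : R)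
    (A B N : Matrix m m R) :
    ((a • A - b • B) * N).trace = a * (A * N).trace - b * (B * N).trace := by
  simp only [sub_mul, smul_mul, trace_sub, trace_smul, smul_eq_mul]

section Tensor

variable {L : ℕ} {d : Fin L → ℕ}

lemma tens_mul (X Y : ∀ l, Matrix (Fin (d l)) (Fin (d l)) ℂ) :
    tens (fun l => X l * Y l) = tens X * tens Y := by
  ext a b
  simp only [tens, of_apply, mul_apply, Finset.prod_univ_sum, Fintype.piFinset_univ,
    Finset.prod_mul_distrib]

lemma tens_one : tens (fun l => (1 : Matrix (Fin (d l)) (Fin (d l)) ℂ)) = 1 := by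
  ext a b
  simp [tens, one_apply, Finset.prod_boole, funext_iff]

lemma tens_conjTranspose (X : ∀ l, Matrix (Fin (d l)) (Fin (d l)) ℂ) :
    (tens X)ᴴ = tens fun l => (X l)ᴴ := by
  ext a b
  simp [tens, conjTranspose_apply]

lemma sum_tens {κ : Fin L → Type*} [∀ l, Fintype (κ l)]
    (A : ∀ l, κ l → Matrix (Fin (d l)) (Fin (d l)) ℂ) :
    ∑ c : ∀ l, κ l, tens (fun l => A l (c l)) = tens fun l => ∑ i, A l i := by
  ext a b
  simp only [Matrix.sum_apply, tens, of_apply]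
  rw [Finset.prod_univ_sum, Fintype.piFinset_univ]

lemma trace_tens (X : ∀ l, Matrix (Fin (d l)) (Fin (d l)) ℂ) :
    (tens X).trace = ∏ l, (X l).trace := by
  simp only [trace, diag, tens, of_apply, Finset.prod_univ_sum, Fintype.piFinset_univ]

lemma trace_tens_mul_tens (X Y : ∀ l, Matrix (Fin (d l)) (Fin (d l)) ℂ) :
    (tens X * tens Y).trace = ∏ l, (X l * Y l).trace := by
  rw [← tens_mul, trace_tens]

open scoped MatrixOrder in
lemma PosSemidef.tens {X : ∀ l, Matrix (Fin (d l)) (Fin (d l)) ℂ}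
    (hX : ∀ l, (X l).PosSemidef) : (tens X).PosSemidef := by
  choose B hB using fun l => CStarAlgebra.nonneg_iff_eq_star_mul_self.mp (hX l).nonneg
  have hX : X = fun l => (B l)ᴴ * B l := funext hB
  rw [hX, tens_mul, ← tens_conjTranspose]
  exact posSemidef_conjTranspose_mul_self _

lemma one_sub_sum_tens_some_posSemidef {κ : Fin L → Type*} [∀ l, Fintype (κ l)]
    {M : ∀ l, Option (κ l) → Matrix (Fin (d l)) (Fin (d l)) ℂ}
    (hM : ∀ l j, (M l j).PosSemidef) (hMsum : ∀ l, ∑ j, M l j = 1) :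
    (1 - ∑ c : ∀ l, κ l, tens fun l => M l (some (c l))).PosSemidef := by
  classical
  let some' : (∀ l, κ l) ↪ (∀ l, Option (κ l)) :=
    ⟨fun c l => some (c l), fun c c' h => funext fun l => Option.some_injective _ (congrFun h l)⟩
  have hone : ∑ c : ∀ l, Option (κ l), tens (fun l => M l (c l)) = 1 := by
    rw [sum_tens, funext hMsum, tens_one]
  have hsome : ∑ c : ∀ l, κ l, tens (fun l => M l (some (c l))) =
      ∑ c ∈ Finset.univ.map some', tens fun l => M l (c l) :=
    (Finset.sum_map Finset.univ some' fun c => tens fun l => M l (c l)).symm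
  rw [← hone, hsome, ← Finset.sum_sdiff_eq_sub (Finset.subset_univ _)]
  exact posSemidef_sum _ fun c _ => PosSemidef.tens fun l => hM l (c l)

lemma trace_tens_smul_sub_smul_mul_eq_zero {a b : Fin L → ℂ}
    {A B N : ∀ l, Matrix (Fin (d l)) (Fin (d l)) ℂ}
    (h : ∀ l, ((a l • A l - b l • B l) * N l).trace = 0) :
    (((∏ l, a l) • tens A - (∏ l, b l) • tens B) * tens N).trace = 0 := by
  simp only [trace_smul_sub_smul_mul, sub_eq_zero, trace_tens_mul_tens] at h ⊢
  simp only [← Finset.prod_mul_distrib, h]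

end Tensor

theorem stmt_14_general {L : ℕ} {d n : Fin L → ℕ}
    (η : ∀ l, Fin (n l) → ℝ)
    (ρ : ∀ l, Fin (n l) → Matrix (Fin (d l)) (Fin (d l)) ℂ)
    (ρ₀ : ∀ l, Matrix (Fin (d l)) (Fin (d l)) ℂ)
    (C : ∀ l, Fin (n l) → ℝ)
    (M : ∀ l, Option (Fin (n l)) → Matrix (Fin (d l)) (Fin (d l)) ℂ)
    (hMpsd : ∀ l j, (M l j).PosSemidef) (hMsum : ∀ l, ∑ j, M l j = 1)
    (hMmc : ∀ l i, (((C l i : ℂ) • ρ₀ l - (η l i : ℂ) • ρ l i) * M l (some i)).trace = 0) :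
    (∀ c : ∀ l, Fin (n l), (tens (fun l => M l (some (c l)))).PosSemidef) ∧
    (1 - ∑ c : ∀ l, Fin (n l), tens (fun l => M l (some (c l)))).PosSemidef ∧
    (∀ c : ∀ l, Fin (n l),
      ((((∏ l, C l (c l) : ℝ) : ℂ) • tens ρ₀ -
          ((∏ l, η l (c l) : ℝ) : ℂ) • tens (fun l => ρ l (c l))) *
        tens (fun l => M l (some (c l)))).trace = 0) := by
  refine ⟨fun c => PosSemidef.tens fun l => hMpsd l (some (c l)),
    one_sub_sum_tens_some_posSemidef hMpsd hMsum, fun c => ?_⟩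
  rw [Complex.ofReal_prod, Complex.ofReal_prod]
  exact trace_tens_smul_sub_smul_mul_eq_zero fun l => hMmc l (c l)

/-- if each M^l is a maximum-confidence measurement of E^l, then the
product measurement with conclusive operators ⊗_l M_{c_l}^l (and inconclusive operator
1 − Σ_c⃗ ⊗_l M_{c_l}^l) is a maximum-confidence measurement of the product ensemble. -/
theorem stmt_14 {L : ℕ} (hL : 0 < L) {d n : Fin L → ℕ}
    (hd : ∀ l, 0 < d l) (hn : ∀ l, 0 < n l)
    (η : ∀ l, Fin (n l) → ℝ)
    (ρ : ∀ l, Fin (n l) → Matrix (Fin (d l)) (Fin (d l)) ℂ)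
    (hη : ∀ l i, 0 < η l i) (hηsum : ∀ l, ∑ i, η l i = 1)
    (hρ : ∀ l i, (ρ l i).PosSemidef) (hρtr : ∀ l i, (ρ l i).trace = 1)
    (ρ₀ : ∀ l, Matrix (Fin (d l)) (Fin (d l)) ℂ)
    (hρ₀ : ∀ l, ρ₀ l = ∑ i, (η l i : ℂ) • ρ l i)
    (C : ∀ l, Fin (n l) → ℝ)
    (hC : ∀ l i, IsLeast { q : ℝ | ((q : ℂ) • ρ₀ l - (η l i : ℂ) • ρ l i).PosSemidef } (C l i))
    (M : ∀ l, Option (Fin (n l)) → Matrix (Fin (d l)) (Fin (d l)) ℂ)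
    (hMpsd : ∀ l j, (M l j).PosSemidef) (hMsum : ∀ l, ∑ j, M l j = 1)
    (hMmc : ∀ l i, (((C l i : ℂ) • ρ₀ l - (η l i : ℂ) • ρ l i) * M l (some i)).trace = 0) :
    (∀ c : ∀ l, Fin (n l), (tens (fun l => M l (some (c l)))).PosSemidef) ∧
    (1 - ∑ c : ∀ l, Fin (n l), tens (fun l => M l (some (c l)))).PosSemidef ∧
    (∀ c : ∀ l, Fin (n l),
      ((((∏ l, C l (c l) : ℝ) : ℂ) • tens ρ₀ -
          ((∏ l, η l (c l) : ℝ) : ℂ) • tens (fun l => ρ l (c l))) *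
        tens (fun l => M l (some (c l)))).trace = 0) :=
  stmt_14_general η ρ ρ₀ C M hMpsd hMsum hMmc
end
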